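/- arXiv:2310.19997 — 4 statements merged into one kernel-verified Lean document; each statement's English description precedes it below -/
import Mathlib

section
/- Let Z and U be types, f : Z × U → Z, l : Z × U → ℝ, Vf : Z → ℝ, κ : Z → U, and Zf ⊆ Z such that for all z ∈ Zf: f(z, κ(z)) ∈ Zf and Vf(f(z, κ(z))) − Vf(z) ≤ −l(z, κ(z)). Let N ≥ 1, let v_0, …, v_{N−1} ∈ U be a control sequence and z_0, …, z_N ∈ Z the induced trajectory with z_{i+1} = f(z_i, v_i), and suppose z_N ∈ Zf. Define the cost J = Σ_{i=0}^{N−1} l(z_i, v_i) + Vf(z_N). Define the shifted control sequence v'_i = v_{i+1} for i = 0, …, N−2 and v'_{N−1} = κ(z_N), with induced trajectory z'_i = z_{i+1} for i = 0, …, N−1 (so z'_N = f(z_N, κ(z_N))), and shifted cost J' = Σ_{i=0}^{N−1} l(z'_i, v'_i) + Vf(z'_N). Then J' ≤ J − l(z_0, v_0). -/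
/-!
Shifting drops the first stage cost `l (z 0, v 0)` from the sum and appends the stage cost
`l (z N, κ (z N))`; replacing `Vf (z N)` by `Vf (f (z N, κ (z N)))` saves at least that
much by the terminal decrease condition.
-/

open Finset

theorem Finset.sum_range_shift_eq {M : Type*} [AddCommGroup M] {N : ℕ} (hN : 1 ≤ N)
    {g g' : ℕ → M} (hshift : ∀ i < N - 1, g' i = g (i + 1)) :
    ∑ i ∈ range N, g' i = ∑ i ∈ range N, g i - g 0 + g' (N - 1) := by
  obtain ⟨K, rfl⟩ : ∃ K, N = K + 1 := ⟨N - 1, by omega⟩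
  rw [sum_range_succ, sum_range_succ', Nat.add_sub_cancel,
    sum_congr rfl fun i hi => hshift i (by simpa using hi)]
  abel

theorem shifted_cost_decrease_general {Z U : Type*}
    (f : Z × U → Z) (l : Z × U → ℝ) (Vf : Z → ℝ) (κ : Z → U) (Zf : Set Z)
    (hdec : ∀ z ∈ Zf, Vf (f (z, κ z)) - Vf z ≤ - l (z, κ z))
    (N : ℕ) (hN : 1 ≤ N)
    (v : ℕ → U) (z : ℕ → Z)
    (hzN : z N ∈ Zf)
    (v' : ℕ → U) (z' : ℕ → Z)
    (hv' : ∀ i < N - 1, v' i = v (i + 1))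
    (hv'N : v' (N - 1) = κ (z N))
    (hz' : ∀ i < N, z' i = z (i + 1))
    (hz'N : z' N = f (z N, κ (z N))) :
    (∑ i ∈ Finset.range N, l (z' i, v' i)) + Vf (z' N)
      ≤ ((∑ i ∈ Finset.range N, l (z i, v i)) + Vf (z N)) - l (z 0, v 0) := by
  have hsum := sum_range_shift_eq hN (g := fun i => l (z i, v i))
    (g' := fun i => l (z' i, v' i)) fun i hi => by rw [hz' i (by omega), hv' i hi]
  have hlast : l (z' (N - 1), v' (N - 1)) = l (z N, κ (z N)) := by
    rw [hz' _ (by omega), Nat.sub_add_cancel hN, hv'N]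
  rw [hsum, hlast, hz'N]
  linarith [hdec _ hzN]

/-- The shifted-sequence cost-decrease argument (paper's Theorem 6): with terminal set
`Zf`, terminal controller `κ` satisfying invariance and the terminal decrease condition,
the cost of the shifted control sequence satisfies `J' ≤ J − l(z_0, v_0)`. -/
theorem shifted_cost_decrease {Z U : Type*}
    (f : Z × U → Z) (l : Z × U → ℝ) (Vf : Z → ℝ) (κ : Z → U) (Zf : Set Z)
    (hinv : ∀ z ∈ Zf, f (z, κ z) ∈ Zf)
    (hdec : ∀ z ∈ Zf, Vf (f (z, κ z)) - Vf z ≤ - l (z, κ z))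
    (N : ℕ) (hN : 1 ≤ N)
    (v : ℕ → U) (z : ℕ → Z)
    (hz : ∀ i < N, z (i + 1) = f (z i, v i))
    (hzN : z N ∈ Zf)
    (v' : ℕ → U) (z' : ℕ → Z)
    (hv' : ∀ i < N - 1, v' i = v (i + 1))
    (hv'N : v' (N - 1) = κ (z N))
    (hz' : ∀ i < N, z' i = z (i + 1))
    (hz'N : z' N = f (z N, κ (z N))) :
    (∑ i ∈ Finset.range N, l (z' i, v' i)) + Vf (z' N)
      ≤ ((∑ i ∈ Finset.range N, l (z i, v i)) + Vf (z N)) - l (z 0, v 0) :=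
  shifted_cost_decrease_general f l Vf κ Zf hdec N hN v z hzN v' z' hv' hv'N hz' hz'N
end

section
/- Let ρ > 0, νmax > 0 and e ∈ ℝ with |e| < π/4. For u₂ ∈ ℝ, the following four inequalities hold simultaneously: ρ(cos e − sin e)u₂ ≤ νmax, ρ(sin e + cos e)u₂ ≤ νmax, ρ(sin e − cos e)u₂ ≤ νmax and −ρ(sin e + cos e)u₂ ≤ νmax, if and only if |u₂| ≤ (νmax/ρ)·λ(e), where λ(e) = 1/(cos e + |sin e|). -/
/-!
The four rows come in opposite pairs `±ρ(cos e - sin e)u₂`, `±ρ(cos e + sin e)u₂`, so together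
they say `ρ · max |c - s| |c + s| · |u₂| ≤ νmax`, and `max |c - s| |c + s| = |c| + |s|`.
For `|e| < π/4` the cosine is positive, so `|cos e| + |sin e| = 1 / λ(e)`.
-/

open Real

theorem max_abs_sub_abs_add {α : Type*} [AddCommGroup α] [LinearOrder α] [IsOrderedAddMonoid α]
    (a b : α) : max |a - b| |a + b| = |a| + |b| := by
  refine le_antisymm (max_le (abs_sub a b) (abs_add_le a b)) ?_
  rcases abs_cases a with ⟨ha, -⟩ | ⟨ha, -⟩ <;> rcases abs_cases b with ⟨hb, -⟩ | ⟨hb, -⟩ <;>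
    rw [ha, hb]
  · exact le_max_of_le_right (le_abs_self _)
  · exact le_max_of_le_left (by rw [← sub_eq_add_neg]; exact le_abs_self _)
  · exact le_max_of_le_left (by rw [abs_sub_comm, sub_eq_neg_add]; exact le_abs_self _)
  · exact le_max_of_le_right (by rw [← neg_add]; exact neg_le_abs _)

theorem rows_le_iff_abs_add_abs {R : Type*} [CommRing R] [LinearOrder R] [IsStrictOrderedRing R]
    {k : R} (hk : 0 ≤ k) (c s u ν : R) :
    (k * (c - s) * u ≤ ν ∧ k * (s + c) * u ≤ ν ∧ k * (s - c) * u ≤ ν ∧ -(k * (s + c) * u) ≤ ν) ↔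
      k * (|c| + |s|) * |u| ≤ ν := by
  have abs_eq : ∀ a, k * |a| * |u| = |k * a * u| := fun a => by
    rw [abs_mul, abs_mul, abs_of_nonneg hk]
  have row_neg : k * (s - c) * u = -(k * (c - s) * u) := by ring
  rw [← max_abs_sub_abs_add, mul_max_of_nonneg _ _ hk, max_mul_of_nonneg _ _ (abs_nonneg u),
    max_le_iff, abs_eq, abs_eq, abs_le', abs_le', row_neg, add_comm s c]
  tauto

theorem angular_velocity_bound_general (ρ νmax : ℝ) (hρ : 0 < ρ)
    (e : ℝ) (he : |e| < π / 4) (u2 : ℝ) :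
    (ρ * (Real.cos e - Real.sin e) * u2 ≤ νmax ∧
     ρ * (Real.sin e + Real.cos e) * u2 ≤ νmax ∧
     ρ * (Real.sin e - Real.cos e) * u2 ≤ νmax ∧
     -(ρ * (Real.sin e + Real.cos e) * u2) ≤ νmax)
    ↔ |u2| ≤ (νmax / ρ) * (1 / (Real.cos e + |Real.sin e|)) := by
  obtain ⟨he_left, he_right⟩ := abs_lt.mp he
  have hcos : 0 < cos e := cos_pos_of_mem_Ioo ⟨by linarith [pi_pos], by linarith [pi_pos]⟩
  rw [rows_le_iff_abs_add_abs hρ.le, abs_of_pos hcos, mul_one_div, div_div,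
    le_div_iff₀ (by positivity), mul_comm]

/-- The four rows of the transformed input-constraint polytope at `u₁ = 0` hold
simultaneously iff `|u₂| ≤ (νmax/ρ) · λ(e)`, where `λ(e) = 1/(cos e + |sin e|)`. -/
theorem angular_velocity_bound (ρ νmax : ℝ) (hρ : 0 < ρ) (hν : 0 < νmax)
    (e : ℝ) (he : |e| < π / 4) (u2 : ℝ) :
    (ρ * (Real.cos e - Real.sin e) * u2 ≤ νmax ∧
     ρ * (Real.sin e + Real.cos e) * u2 ≤ νmax ∧
     ρ * (Real.sin e - Real.cos e) * u2 ≤ νmax ∧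
     -(ρ * (Real.sin e + Real.cos e) * u2) ≤ νmax)
    ↔ |u2| ≤ (νmax / ρ) * (1 / (Real.cos e + |Real.sin e|)) :=
  angular_velocity_bound_general ρ νmax hρ e he u2
end

section
/- Let νmax > 0 and e ∈ ℝ with |e| < π/4. For u₁ ∈ ℝ, the following four inequalities hold simultaneously: (cos e + sin e)u₁ ≤ νmax, (−cos e + sin e)u₁ ≤ νmax, −(cos e + sin e)u₁ ≤ νmax and (cos e − sin e)u₁ ≤ νmax, if and only if |u₁| ≤ νmax·λ(e), where λ(e) = 1/(cos e + |sin e|). -/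
/-!
The four rows say exactly that `|(cos e + sin e) u₁| ≤ νmax` and `|(cos e - sin e) u₁| ≤ νmax`,
and `max |c + s| |c - s| = |c| + |s|`. For `|e| < π/4` we have `|sin e| < cos e`, so `|cos e| = cos e`
and `cos e + |sin e| > 0` can be divided out.
-/

open Real

theorem max_abs_add_abs_sub {α : Type*} [AddCommGroup α] [LinearOrder α] [IsOrderedAddMonoid α]
    (a b : α) : max |a + b| |a - b| = |a| + |b| := by
  refine le_antisymm (max_le (abs_add_le a b) (abs_sub a b)) ?_
  rcases abs_cases a with ⟨ha, -⟩ | ⟨ha, -⟩ <;> rcases abs_cases b with ⟨hb, -⟩ | ⟨hb, -⟩ <;>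
    rw [ha, hb]
  · exact le_max_of_le_left (le_abs_self _)
  · exact le_max_of_le_right ((le_abs_self _).trans_eq' (sub_eq_add_neg a b))
  · exact le_max_of_le_right ((neg_le_abs _).trans_eq' (by abel))
  · exact le_max_of_le_left ((neg_le_abs _).trans_eq' (by abel))

theorem rows_le_iff_add_abs_mul_abs_le {α : Type*} [Ring α] [LinearOrder α] [IsStrictOrderedRing α]
    (c s u ν : α) :
    ((c + s) * u ≤ ν ∧ (-c + s) * u ≤ ν ∧ -((c + s) * u) ≤ ν ∧ (c - s) * u ≤ ν) ↔
      (|c| + |s|) * |u| ≤ ν := by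
  have hneg : (-c + s) * u = -((c - s) * u) := by noncomm_ring
  calc _ ↔ |(c + s) * u| ≤ ν ∧ |(c - s) * u| ≤ ν := by
        rw [hneg, abs_le', abs_le']; tauto
    _ ↔ max |c + s| |c - s| * |u| ≤ ν := by
        rw [abs_mul, abs_mul, max_mul_of_nonneg _ _ (abs_nonneg u), max_le_iff]
    _ ↔ _ := by rw [max_abs_add_abs_sub]

theorem abs_sin_lt_cos_of_abs_lt_pi_div_four {e : ℝ} (he : |e| < π / 4) : |sin e| < cos e := by
  have hπ := pi_pos
  have he₀ := abs_nonneg e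
  calc |sin e| = sin |e| := abs_sin_eq_sin_abs_of_abs_le_pi (by linarith)
    _ < sin (π / 2 - |e|) :=
        sin_lt_sin_of_lt_of_le_pi_div_two (by linarith) (by linarith) (by linarith)
    _ = cos e := by rw [sin_pi_div_two_sub, cos_abs]

theorem linear_velocity_bound_general (νmax : ℝ)
    (e : ℝ) (he : |e| < π / 4) (u1 : ℝ) :
    ((Real.cos e + Real.sin e) * u1 ≤ νmax ∧
     (-Real.cos e + Real.sin e) * u1 ≤ νmax ∧
     -((Real.cos e + Real.sin e) * u1) ≤ νmax ∧
     (Real.cos e - Real.sin e) * u1 ≤ νmax)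
    ↔ |u1| ≤ νmax * (1 / (Real.cos e + |Real.sin e|)) := by
  have hsin := abs_sin_lt_cos_of_abs_lt_pi_div_four he
  have hcos : 0 < cos e := (abs_nonneg _).trans_lt hsin
  rw [rows_le_iff_add_abs_mul_abs_le, abs_of_pos hcos, mul_one_div,
    le_div_iff₀ (by positivity), mul_comm]

/-- The four rows of the transformed input-constraint polytope at `u₂ = 0` hold
simultaneously iff `|u₁| ≤ νmax · λ(e)`, where `λ(e) = 1/(cos e + |sin e|)`. -/
theorem linear_velocity_bound (νmax : ℝ) (hν : 0 < νmax)
    (e : ℝ) (he : |e| < π / 4) (u1 : ℝ) :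
    ((Real.cos e + Real.sin e) * u1 ≤ νmax ∧
     (-Real.cos e + Real.sin e) * u1 ≤ νmax ∧
     -((Real.cos e + Real.sin e) * u1) ≤ νmax ∧
     (Real.cos e - Real.sin e) * u1 ≤ νmax)
    ↔ |u1| ≤ νmax * (1 / (Real.cos e + |Real.sin e|)) :=
  linear_velocity_bound_general νmax e he u1
end

section
/- Let ρ > 0, νmax > 0 and define the admissible input set U = { (u₁, u₂) ∈ ℝ² : |u₁|/νmax + ρ|u₂|/νmax ≤ 1 }. For e ∈ ℝ with |e| ≤ π/4 define the matrix R(e) = [[cos e, −ρ sin e], [(1/ρ) sin e, cos e]] and λ(e) = 1/(cos e + |sin e|). Then λ(e)·U ⊆ R(e) '' U, i.e., for every u ∈ U there exists u' ∈ U with λ(e)·u = R(e)·u'. -/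
open Real Matrix

/-!
Since `det R(e) = cos² e + sin² e = 1`, the preimage of `λ(e) • u` is `u' = λ(e) • adj R(e) u`.
The rows of `adj R(e)` have entries `cos e` and `±sin e` (up to the weights `ρ`, `1/ρ` that the
gauge `|u₀| + ρ |u₁|` of `U` absorbs), so the triangle inequality stretches this gauge by at most
`cos e + |sin e| = 1 / λ(e)`, which the factor `λ(e)` undoes.
-/

def diamondGauge (ρ : ℝ) (u : Fin 2 → ℝ) : ℝ := |u 0| + ρ * |u 1|

lemma diamondGauge_smul {ρ a : ℝ} (ha : 0 ≤ a) (v : Fin 2 → ℝ) :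
    diamondGauge ρ (a • v) = a * diamondGauge ρ v := by
  simp only [diamondGauge, Pi.smul_apply, smul_eq_mul, abs_mul, abs_of_nonneg ha]
  ring

section Unicycle

variable {c s ρ : ℝ}

lemma det_unicycle_matrix (hρ : ρ ≠ 0) :
    (!![c, -ρ * s; (1/ρ) * s, c]).det = c ^ 2 + s ^ 2 := by
  rw [det_fin_two_of]
  field_simp
  ring

lemma diamondGauge_adjugate_unicycle_mulVec_le (hρ : 0 < ρ) (hc : 0 ≤ c) (u : Fin 2 → ℝ) :
    diamondGauge ρ (adjugate !![c, -ρ * s; (1/ρ) * s, c] *ᵥ u)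
      ≤ (c + |s|) * diamondGauge ρ u := by
  simp only [diamondGauge, adjugate_fin_two_of, mulVec, dotProduct, Fin.sum_univ_two, of_apply,
    cons_val', cons_val_zero, cons_val_one, empty_val', cons_val_fin_one, neg_mul, neg_neg]
  have hrow₀ : |c * u 0 + ρ * s * u 1| ≤ c * |u 0| + ρ * |s| * |u 1| := by
    simpa [abs_mul, abs_of_nonneg hc, abs_of_pos hρ] using abs_add_le (c * u 0) (ρ * s * u 1)
  have hrow₁ : ρ * |-(1/ρ * s * u 0) + c * u 1| ≤ |s| * |u 0| + ρ * c * |u 1| := by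
    have hscaled : ρ * (-(1/ρ * s * u 0) + c * u 1) = -(s * u 0) + ρ * c * u 1 := by
      field_simp
    calc ρ * |-(1/ρ * s * u 0) + c * u 1| = |-(s * u 0) + ρ * c * u 1| := by
          rw [← hscaled, abs_mul, abs_of_pos hρ]
      _ ≤ |s| * |u 0| + ρ * c * |u 1| := by
          simpa [abs_mul, abs_of_nonneg hc, abs_of_pos hρ] using
            abs_add_le (-(s * u 0)) (ρ * c * u 1)
  nlinarith [hrow₀, hrow₁]

end Unicycle

lemma one_le_cos_add_abs_sin {x : ℝ} (hx : 0 ≤ cos x) : 1 ≤ cos x + |sin x| := by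
  have hcos : cos x ^ 2 ≤ cos x := by nlinarith [cos_le_one x]
  have hsin : sin x ^ 2 ≤ |sin x| := by
    rw [← sq_abs]; nlinarith [abs_nonneg (sin x), abs_sin_le_one x]
  linarith [sin_sq_add_cos_sq x]

/-- `λ(e)·U ⊆ R(e) '' U`: for every `u` in the diamond-shaped admissible input set `U`,
there is `u' ∈ U` with `λ(e) • u = R(e) *ᵥ u'`, where
`R(e) = [[cos e, −ρ sin e], [(1/ρ) sin e, cos e]]` and `λ(e) = 1/(cos e + |sin e|)`. -/
theorem scaled_U_subset_image (ρ νmax : ℝ) (hρ : 0 < ρ) (hν : 0 < νmax)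
    (e : ℝ) (he : |e| ≤ π / 4) :
    ∀ u : Fin 2 → ℝ, |u 0| / νmax + ρ * |u 1| / νmax ≤ 1 →
      ∃ u' : Fin 2 → ℝ, (|u' 0| / νmax + ρ * |u' 1| / νmax ≤ 1) ∧
        (1 / (Real.cos e + |Real.sin e|)) • u =
          (!![Real.cos e, -ρ * Real.sin e; (1/ρ) * Real.sin e, Real.cos e]) *ᵥ u' := by
  intro u hu
  set R := !![Real.cos e, -ρ * Real.sin e; (1/ρ) * Real.sin e, Real.cos e]
  have hcos : 0 ≤ cos e := cos_nonneg_of_neg_pi_div_two_le_of_le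
    (by linarith [(abs_le.mp he).1, pi_pos]) (by linarith [(abs_le.mp he).2, pi_pos])
  have hstretch : 0 < cos e + |sin e| := by linarith [one_le_cos_add_abs_sin hcos]
  refine ⟨(1 / (cos e + |sin e|)) • (adjugate R *ᵥ u), ?_, ?_⟩
  · rw [← add_div] at hu ⊢
    change diamondGauge ρ u / νmax ≤ 1 at hu
    change diamondGauge ρ _ / νmax ≤ 1
    calc diamondGauge ρ ((1 / (cos e + |sin e|)) • (adjugate R *ᵥ u)) / νmax
        = (1 / (cos e + |sin e|)) * diamondGauge ρ (adjugate R *ᵥ u) / νmax := by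
          rw [diamondGauge_smul (by positivity)]
      _ ≤ (1 / (cos e + |sin e|)) * ((cos e + |sin e|) * diamondGauge ρ u) / νmax := by
          gcongr; exact diamondGauge_adjugate_unicycle_mulVec_le hρ hcos u
      _ = diamondGauge ρ u / νmax := by field_simp
      _ ≤ 1 := hu
  · rw [mulVec_smul, mulVec_mulVec, mul_adjugate, det_unicycle_matrix hρ.ne',
      cos_sq_add_sin_sq, one_smul, one_mulVec]
end
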